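/- Let τ0 > 0 and for (d,v) ∈ ℝ² write Z = d + τ0·v. Let D ⊂ ℝ² be a bounded Lebesgue-measurable set of positive Lebesgue measure, and let u : ℝ² → ℝ be Lebesgue integrable on D with u(d,v) > 0 for all (d,v) ∈ D. Then for every σ > 0 and every λ0 ∈ ℝ such that ∂U/∂λ(λ0,σ) = 0, one has ∂²U/∂λ²(λ0,σ) > 0; that is, every critical point of λ ↦ U(λ,σ) is a strict local minimum. -/

import Mathlib

open MeasureTheory Real Filter

/-- The Gaussian Q-function `Q(x) = (1/√(2π)) ∫_x^∞ exp(−t²/2) dt`. -/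
noncomputable def Qfun (x : ℝ) : ℝ :=
  (Real.sqrt (2 * Real.pi))⁻¹ * ∫ t in Set.Ioi x, Real.exp (-t ^ 2 / 2)

/-- The wrong-decision probability `P_w(d,v;λ,σ)`. -/
noncomputable def Pw (τ0 σ lam : ℝ) (p : ℝ × ℝ) : ℝ :=
  if 0 ≤ p.1 + τ0 * p.2 then Qfun ((p.1 + τ0 * p.2 - lam) / σ)
  else Qfun (-(p.1 + τ0 * p.2 - lam) / σ)

/-- The total wrong decision loss `U(λ,σ) = ∬_D u(d,v) P_w(d,v;λ,σ) dd dv`. -/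
noncomputable def Uloss (τ0 : ℝ) (D : Set (ℝ × ℝ)) (u : ℝ × ℝ → ℝ) (lam σ : ℝ) : ℝ :=
  ∫ p in D, u p * Pw τ0 σ lam p

open Set

/-! With `s = sign Z` and `φ` the standard normal density, `P_w = Q(s (Z - λ) / σ)`, hence
`∂P_w/∂λ = (s/σ) φ((Z - λ)/σ)` and `∂²P_w/∂λ² = ((Z - λ)/σ²) ∂P_w/∂λ`. Both are bounded uniformly
in `λ` (using `|x| e^{-x²/2} ≤ 1`), so `U` may be differentiated twice under the integral sign.
At a critical point `λ0` the vanishing of `U'(λ0) = ∫_D u ∂P_w/∂λ` cancels the `λ0`-term of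
`U''(λ0)`, leaving `σ⁻² ∫_D u Z ∂P_w/∂λ = σ⁻³ ∫_D u |Z| φ((Z - λ0)/σ)`. This is positive since
`u > 0` on `D` and the line `Z = 0` is Lebesgue-null. -/

lemma hasDerivAt_integral_Ioi {E : Type*} [NormedAddCommGroup E] [NormedSpace ℝ E]
    [CompleteSpace E] {f : ℝ → E} (hf : Integrable f) (hfc : Continuous f) (x : ℝ) :
    HasDerivAt (fun y => ∫ t in Ioi y, f t) (-f x) x := by
  have h : (fun y => ∫ t in Ioi y, f t) =
      fun y => (∫ t in Ioi 0, f t) - ∫ t in (0 : ℝ)..y, f t := by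
    funext y
    rw [← intervalIntegral.integral_Ioi_sub_Ioi' hf.integrableOn hf.integrableOn, sub_sub_cancel]
  rw [h]
  exact (intervalIntegral.integral_hasDerivAt_right hf.intervalIntegrable
    (hfc.stronglyMeasurableAtFilter _ _) hfc.continuousAt).const_sub _

lemma integrable_exp_neg_sq_div_two : Integrable fun t : ℝ => exp (-t ^ 2 / 2) := by
  simpa [div_eq_inv_mul] using integrable_exp_neg_mul_sq (show (0 : ℝ) < 1 / 2 by norm_num)

lemma integral_exp_neg_sq_div_two : ∫ t : ℝ, exp (-t ^ 2 / 2) = √(2 * π) := by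
  simp_rw [show ∀ t : ℝ, -t ^ 2 / 2 = -(1 / 2) * t ^ 2 from fun t => by ring, integral_gaussian]
  ring_nf

lemma hasDerivAt_Qfun (x : ℝ) : HasDerivAt Qfun (-((√(2 * π))⁻¹ * exp (-x ^ 2 / 2))) x := by
  rw [← mul_neg]
  exact (hasDerivAt_integral_Ioi integrable_exp_neg_sq_div_two (by fun_prop) x).const_mul _

lemma continuous_Qfun : Continuous Qfun :=
  continuous_iff_continuousAt.2 fun x => (hasDerivAt_Qfun x).continuousAt

lemma Qfun_nonneg (x : ℝ) : 0 ≤ Qfun x :=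
  mul_nonneg (by positivity) (setIntegral_nonneg measurableSet_Ioi fun t _ => (exp_pos _).le)

lemma Qfun_le_one (x : ℝ) : Qfun x ≤ 1 := by
  have h2π : 0 < √(2 * π) := by positivity
  calc Qfun x ≤ (√(2 * π))⁻¹ * ∫ t : ℝ, exp (-t ^ 2 / 2) := by
        refine mul_le_mul_of_nonneg_left ?_ (by positivity)
        exact setIntegral_le_integral integrable_exp_neg_sq_div_two
          (ae_of_all _ fun t => (exp_pos _).le)
    _ = 1 := by rw [integral_exp_neg_sq_div_two, inv_mul_cancel₀ h2π.ne']

lemma abs_mul_exp_neg_sq_div_two_le_one (x : ℝ) : |x| * exp (-x ^ 2 / 2) ≤ 1 := by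
  have hx : |x| ≤ x ^ 2 / 2 + 1 := by nlinarith [sq_nonneg (|x| - 1), sq_abs x]
  calc |x| * exp (-x ^ 2 / 2) ≤ (x ^ 2 / 2 + 1) * exp (-(x ^ 2 / 2)) := by
        rw [neg_div]; gcongr
    _ ≤ exp (x ^ 2 / 2) * exp (-(x ^ 2 / 2)) := by gcongr; exact add_one_le_exp _
    _ = 1 := by rw [← exp_add, add_neg_cancel, exp_zero]

noncomputable def decisionSign (τ0 : ℝ) (p : ℝ × ℝ) : ℝ :=
  if 0 ≤ p.1 + τ0 * p.2 then 1 else -1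

@[fun_prop]
lemma measurable_decisionSign (τ0 : ℝ) : Measurable (decisionSign τ0) :=
  Measurable.ite (measurableSet_le measurable_const (by fun_prop)) measurable_const
    measurable_const

lemma abs_decisionSign (τ0 : ℝ) (p : ℝ × ℝ) : |decisionSign τ0 p| = 1 := by
  unfold decisionSign; split_ifs <;> simp

lemma mul_decisionSign (τ0 : ℝ) (p : ℝ × ℝ) :
    (p.1 + τ0 * p.2) * decisionSign τ0 p = |p.1 + τ0 * p.2| := by
  unfold decisionSign
  split_ifs with h
  · rw [mul_one, abs_of_nonneg h]
  · rw [mul_neg_one, abs_of_neg (not_le.1 h)]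

lemma Pw_eq_Qfun (τ0 σ lam : ℝ) (p : ℝ × ℝ) :
    Pw τ0 σ lam p = Qfun (decisionSign τ0 p * (p.1 + τ0 * p.2 - lam) / σ) := by
  unfold Pw decisionSign; split_ifs <;> simp

lemma measurable_Pw (τ0 σ lam : ℝ) : Measurable (Pw τ0 σ lam) := by
  simp_rw [funext (Pw_eq_Qfun τ0 σ lam)]
  exact continuous_Qfun.measurable.comp (by fun_prop)

lemma abs_Pw_le_one (τ0 σ lam : ℝ) (p : ℝ × ℝ) : |Pw τ0 σ lam p| ≤ 1 := by
  rw [Pw_eq_Qfun, abs_of_nonneg (Qfun_nonneg _)]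
  exact Qfun_le_one _

noncomputable def PwDeriv (τ0 σ lam : ℝ) (p : ℝ × ℝ) : ℝ :=
  (√(2 * π))⁻¹ / σ * decisionSign τ0 p * exp (-((p.1 + τ0 * p.2 - lam) / σ) ^ 2 / 2)

lemma hasDerivAt_Pw (τ0 σ : ℝ) (p : ℝ × ℝ) (lam : ℝ) :
    HasDerivAt (fun l => Pw τ0 σ l p) (PwDeriv τ0 σ lam p) lam := by
  set s := decisionSign τ0 p
  have hinner : HasDerivAt (fun l => s * (p.1 + τ0 * p.2 - l) / σ) (-s / σ) lam := by
    simpa using (((hasDerivAt_id lam).const_sub (p.1 + τ0 * p.2)).const_mul s).div_const σ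
  simp_rw [Pw_eq_Qfun]
  refine ((hasDerivAt_Qfun _).comp lam hinner).congr_deriv ?_
  have hs : s ^ 2 = 1 := by rw [← sq_abs, abs_decisionSign, one_pow]
  rw [PwDeriv, mul_div_assoc, mul_pow, hs, one_mul]
  ring

lemma hasDerivAt_PwDeriv (τ0 σ : ℝ) (p : ℝ × ℝ) (lam : ℝ) :
    HasDerivAt (fun l => PwDeriv τ0 σ l p)
      ((p.1 + τ0 * p.2 - lam) / σ ^ 2 * PwDeriv τ0 σ lam p) lam := by
  have hinner : HasDerivAt (fun l => -((p.1 + τ0 * p.2 - l) / σ) ^ 2 / 2)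
      ((p.1 + τ0 * p.2 - lam) / σ ^ 2) lam := by
    have h := ((((hasDerivAt_id lam).const_sub (p.1 + τ0 * p.2)).div_const σ).pow 2).neg.div_const 2
    exact h.congr_deriv (by simp only [id]; ring)
  refine (hinner.exp.const_mul ((√(2 * π))⁻¹ / σ * decisionSign τ0 p)).congr_deriv ?_
  rw [PwDeriv]
  ring

@[fun_prop]
lemma measurable_PwDeriv (τ0 σ lam : ℝ) : Measurable (PwDeriv τ0 σ lam) := by
  unfold PwDeriv; fun_prop

lemma abs_PwDeriv_le (τ0 σ lam : ℝ) (p : ℝ × ℝ) :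
    |PwDeriv τ0 σ lam p| ≤ (√(2 * π))⁻¹ / |σ| := by
  rw [PwDeriv, abs_mul, abs_mul, abs_decisionSign, mul_one, abs_div, abs_inv,
    abs_of_nonneg (sqrt_nonneg _), abs_of_pos (exp_pos _)]
  refine mul_le_of_le_one_right (by positivity) (exp_le_one_iff.2 ?_)
  nlinarith [sq_nonneg ((p.1 + τ0 * p.2 - lam) / σ)]

lemma abs_deriv_PwDeriv_le (τ0 σ lam : ℝ) (p : ℝ × ℝ) :
    |(p.1 + τ0 * p.2 - lam) / σ ^ 2 * PwDeriv τ0 σ lam p| ≤ (√(2 * π))⁻¹ / σ ^ 2 := by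
  set x := (p.1 + τ0 * p.2 - lam) / σ
  have h : (p.1 + τ0 * p.2 - lam) / σ ^ 2 * PwDeriv τ0 σ lam p =
      (√(2 * π))⁻¹ / σ ^ 2 * decisionSign τ0 p * (x * exp (-x ^ 2 / 2)) := by
    rw [PwDeriv]; ring
  rw [h, abs_mul, abs_mul, abs_decisionSign, mul_one, abs_mul, abs_of_pos (exp_pos _),
    abs_of_nonneg (by positivity)]
  exact mul_le_of_le_one_right (by positivity) (abs_mul_exp_neg_sq_div_two_le_one x)

lemma hasDerivAt_integral_mul_of_abs_le {α : Type*} [MeasurableSpace α] {μ : Measure α}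
    {u : α → ℝ} (hu : Integrable u μ) {F F' : ℝ → α → ℝ} {B C : ℝ}
    (hF : ∀ l, AEStronglyMeasurable (F l) μ) (hF' : ∀ l, AEStronglyMeasurable (F' l) μ)
    (hFB : ∀ l p, |F l p| ≤ B) (hF'C : ∀ l p, |F' l p| ≤ C)
    (hderiv : ∀ l p, HasDerivAt (F · p) (F' l p) l) (x : ℝ) :
    HasDerivAt (fun l => ∫ p, u p * F l p ∂μ) (∫ p, u p * F' x p ∂μ) x := by
  refine (hasDerivAt_integral_of_dominated_loc_of_deriv_le (bound := fun p => |u p| * C)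
    univ_mem (.of_forall fun l => hu.aestronglyMeasurable.mul (hF l))
    (hu.mul_bdd (hF x) (ae_of_all _ (hFB x))) (hu.aestronglyMeasurable.mul (hF' x))
    (ae_of_all _ fun p l _ => ?_) (hu.abs.mul_const C)
    (ae_of_all _ fun p l _ => (hderiv l p).const_mul (u p))).2
  rw [norm_mul, Real.norm_eq_abs, Real.norm_eq_abs]
  exact mul_le_mul_of_nonneg_left (hF'C l p) (abs_nonneg _)

lemma integral_pos_of_ae_pos {α : Type*} [MeasurableSpace α] {μ : Measure α} [NeZero μ]
    {f : α → ℝ} (hfi : Integrable f μ) (hf : ∀ᵐ x ∂μ, 0 < f x) : 0 < ∫ x, f x ∂μ := by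
  rw [integral_pos_iff_support_of_nonneg_ae (hf.mono fun _ hx => hx.le) hfi, pos_iff_ne_zero]
  intro h
  have hfalse : ∀ᵐ x ∂μ, False :=
    (hf.and (measure_eq_zero_iff_ae_notMem.1 h)).mono fun x hx => hx.2 hx.1.ne'
  exact NeZero.ne μ (ae_eq_bot.1 (eventually_false_iff_eq_bot.1 hfalse))

lemma volume_setOf_add_mul_eq_zero (a : ℝ) : volume {p : ℝ × ℝ | p.1 + a * p.2 = 0} = 0 := by
  set L : ℝ × ℝ →ₗ[ℝ] ℝ := LinearMap.fst ℝ ℝ ℝ + a • LinearMap.snd ℝ ℝ ℝ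
  have hL : L ≠ 0 := fun h => by simpa [L] using LinearMap.congr_fun h (1, 0)
  exact Measure.addHaar_submodule volume (LinearMap.ker L) (LinearMap.ker_eq_top.not.2 hL)

section WrongDecisionLoss

variable (τ0 σ : ℝ) {D : Set (ℝ × ℝ)} {u : ℝ × ℝ → ℝ}

lemma hasDerivAt_Uloss (hu : IntegrableOn u D) (lam : ℝ) :
    HasDerivAt (fun l => Uloss τ0 D u l σ) (∫ p in D, u p * PwDeriv τ0 σ lam p) lam :=
  hasDerivAt_integral_mul_of_abs_le hu (fun l => (measurable_Pw τ0 σ l).aestronglyMeasurable)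
    (fun l => (measurable_PwDeriv τ0 σ l).aestronglyMeasurable) (abs_Pw_le_one τ0 σ)
    (abs_PwDeriv_le τ0 σ) (fun l p => hasDerivAt_Pw τ0 σ p l) lam

lemma hasDerivAt_integral_mul_PwDeriv (hu : IntegrableOn u D) (lam : ℝ) :
    HasDerivAt (fun l => ∫ p in D, u p * PwDeriv τ0 σ l p)
      (∫ p in D, u p * ((p.1 + τ0 * p.2 - lam) / σ ^ 2 * PwDeriv τ0 σ lam p)) lam :=
  hasDerivAt_integral_mul_of_abs_le hu (fun l => (measurable_PwDeriv τ0 σ l).aestronglyMeasurable)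
    (fun l => (by fun_prop : Measurable fun p : ℝ × ℝ =>
      (p.1 + τ0 * p.2 - l) / σ ^ 2 * PwDeriv τ0 σ l p).aestronglyMeasurable)
    (abs_PwDeriv_le τ0 σ) (abs_deriv_PwDeriv_le τ0 σ) (fun l p => hasDerivAt_PwDeriv τ0 σ p l) lam

lemma stat_mul_PwDeriv_pos (hσ : 0 < σ) (lam : ℝ) {p : ℝ × ℝ} (hp : p.1 + τ0 * p.2 ≠ 0) :
    0 < (p.1 + τ0 * p.2) * PwDeriv τ0 σ lam p := by
  have h : (p.1 + τ0 * p.2) * PwDeriv τ0 σ lam p = (√(2 * π))⁻¹ / σ * |p.1 + τ0 * p.2| *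
      exp (-((p.1 + τ0 * p.2 - lam) / σ) ^ 2 / 2) := by
    rw [PwDeriv, ← mul_decisionSign]; ring
  rw [h]
  positivity

lemma integrableOn_mul_stat_mul_PwDeriv (hσ : σ ≠ 0) (hu : IntegrableOn u D) (lam : ℝ) :
    IntegrableOn (fun p => u p * ((p.1 + τ0 * p.2) * PwDeriv τ0 σ lam p)) D := by
  have h1 := hu.mul_bdd (measurable_PwDeriv τ0 σ lam).aestronglyMeasurable
    (ae_of_all _ (abs_PwDeriv_le τ0 σ lam))
  have h2 := hu.mul_bdd (by fun_prop : Measurable fun p : ℝ × ℝ =>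
      (p.1 + τ0 * p.2 - lam) / σ ^ 2 * PwDeriv τ0 σ lam p).aestronglyMeasurable
    (ae_of_all _ (abs_deriv_PwDeriv_le τ0 σ lam))
  refine ((h2.const_mul (σ ^ 2)).add (h1.const_mul lam)).congr (ae_of_all _ fun p => ?_)
  simp only [Pi.add_apply]
  field_simp
  ring

lemma integral_mul_deriv_PwDeriv_of_crit (hσ : σ ≠ 0) (hu : IntegrableOn u D) {lam : ℝ}
    (hcrit : ∫ p in D, u p * PwDeriv τ0 σ lam p = 0) :
    ∫ p in D, u p * ((p.1 + τ0 * p.2 - lam) / σ ^ 2 * PwDeriv τ0 σ lam p) =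
      (σ ^ 2)⁻¹ * ∫ p in D, u p * ((p.1 + τ0 * p.2) * PwDeriv τ0 σ lam p) := by
  have h1 := hu.mul_bdd (measurable_PwDeriv τ0 σ lam).aestronglyMeasurable
    (ae_of_all _ (abs_PwDeriv_le τ0 σ lam))
  have h2 := integrableOn_mul_stat_mul_PwDeriv τ0 σ hσ hu lam
  calc ∫ p in D, u p * ((p.1 + τ0 * p.2 - lam) / σ ^ 2 * PwDeriv τ0 σ lam p)
      = ∫ p in D, ((σ ^ 2)⁻¹ * (u p * ((p.1 + τ0 * p.2) * PwDeriv τ0 σ lam p)) -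
          (σ ^ 2)⁻¹ * lam * (u p * PwDeriv τ0 σ lam p)) := by
        congr 1 with p; ring
    _ = (σ ^ 2)⁻¹ * ∫ p in D, u p * ((p.1 + τ0 * p.2) * PwDeriv τ0 σ lam p) := by
        rw [integral_sub (h2.const_mul _) (h1.const_mul _), integral_const_mul, integral_const_mul,
          hcrit, mul_zero, sub_zero]

lemma integral_mul_stat_mul_PwDeriv_pos (hσ : 0 < σ) (hD : MeasurableSet D)
    (hD0 : 0 < volume D) (hu : IntegrableOn u D) (hu_pos : ∀ p ∈ D, 0 < u p) (lam : ℝ) :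
    0 < ∫ p in D, u p * ((p.1 + τ0 * p.2) * PwDeriv τ0 σ lam p) := by
  have : NeZero (volume.restrict D) := ⟨fun h => hD0.ne' (Measure.restrict_eq_zero.1 h)⟩
  refine integral_pos_of_ae_pos (integrableOn_mul_stat_mul_PwDeriv τ0 σ hσ.ne' hu lam) ?_
  filter_upwards [ae_restrict_mem hD,
    ae_restrict_of_ae (measure_eq_zero_iff_ae_notMem.1 (volume_setOf_add_mul_eq_zero τ0))]
    with p hpD hpZ
  exact mul_pos (hu_pos p hpD) (stat_mul_PwDeriv_pos τ0 σ hσ lam hpZ)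

end WrongDecisionLoss

theorem stmt2_general (τ0 : ℝ) (D : Set (ℝ × ℝ)) (hDmeas : MeasurableSet D)
    (hDpos : 0 < volume D) (u : ℝ × ℝ → ℝ)
    (hu_int : IntegrableOn u D volume)
    (hu_pos : ∀ p ∈ D, 0 < u p)
    (σ : ℝ) (hσ : 0 < σ) (lam0 : ℝ)
    (hcrit : deriv (fun l => Uloss τ0 D u l σ) lam0 = 0) :
    0 < deriv (deriv (fun l => Uloss τ0 D u l σ)) lam0 := by
  have hU' : deriv (fun l => Uloss τ0 D u l σ) = fun l => ∫ p in D, u p * PwDeriv τ0 σ l p :=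
    funext fun l => (hasDerivAt_Uloss τ0 σ hu_int l).deriv
  rw [hU'] at hcrit ⊢
  rw [(hasDerivAt_integral_mul_PwDeriv τ0 σ hu_int lam0).deriv,
    integral_mul_deriv_PwDeriv_of_crit τ0 σ hσ.ne' hu_int hcrit]
  exact mul_pos (by positivity)
    (integral_mul_stat_mul_PwDeriv_pos τ0 σ hσ hDmeas hDpos hu_int hu_pos lam0)

theorem stmt2 (τ0 : ℝ) (hτ0 : 0 < τ0) (D : Set (ℝ × ℝ)) (hDmeas : MeasurableSet D)
    (hDbdd : Bornology.IsBounded D) (hDpos : 0 < volume D) (u : ℝ × ℝ → ℝ)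
    (hu_int : IntegrableOn u D volume)
    (hu_pos : ∀ p ∈ D, 0 < u p)
    (σ : ℝ) (hσ : 0 < σ) (lam0 : ℝ)
    (hcrit : deriv (fun l => Uloss τ0 D u l σ) lam0 = 0) :
    0 < deriv (deriv (fun l => Uloss τ0 D u l σ)) lam0 :=
  stmt2_general τ0 D hDmeas hDpos u hu_int hu_pos σ hσ lam0 hcrit
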